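/- arXiv:0712.2857 — 2 statements merged into one kernel-verified Lean document; each statement's English description precedes it below -/
import Mathlib

section
/- For all integers n and t with 0 < t < n and every natural number l, the single-exclusion number satisfies S(n,t) ≤ l + Σ_{i=1}^{t+1} binom(n,i)·(1 − i·binom(n−i, t−i+1)/binom(n,t))^l, where binom(a,b) denotes the binomial coefficient (equal to 0 when b < 0 or b > a). -/
/-- An `(n,t)`-single-exclusion system: a collection of `t`-subsets (blocks) of an
`n`-set such that every subset `X` with `1 ≤ |X| ≤ t+1` has a block containing all
but exactly one element of `X`. -/
def IsSESystem (n t : ℕ) (S : Finset (Finset (Fin n))) : Prop :=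
  (∀ B ∈ S, B.card = t) ∧
  ∀ X : Finset (Fin n), 1 ≤ X.card → X.card ≤ t + 1 → ∃ B ∈ S, (X \ B).card = 1

/-- The `(n,t)`-single-exclusion number `S(n,t)`: the least number of blocks in an
`(n,t)`-single-exclusion system. -/
noncomputable def SENumber (n t : ℕ) : ℕ :=
  sInf {m : ℕ | ∃ S : Finset (Finset (Fin n)), IsSESystem n t S ∧ S.card = m}


/-!
Choose `l` blocks independently and uniformly among the `t`-subsets. A set `X` with `|X| = i` is
handled by exactly `i * C(n - i, t + 1 - i)` of the `C(n, t)` blocks (choose the excluded element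
of `X` and the `t + 1 - i` elements outside `X`), so the expected number of sets `X` handled by
none of the `l` blocks is the sum in the bound. Some choice of `l` blocks does no worse than the
expectation, and adding one block for each set it misses gives a single-exclusion system.
-/

open Finset

section FirstMoment

variable {β γ : Type*}

lemma card_filter_piFinset_const_forall (T : Finset β) (P : β → Prop) [DecidablePred P] (l : ℕ) :
    #{ω ∈ Fintype.piFinset fun _ : Fin l ↦ T | ∀ j, P (ω j)} = #{B ∈ T | P B} ^ l := by
  have : {ω ∈ Fintype.piFinset fun _ : Fin l ↦ T | ∀ j, P (ω j)} =
      Fintype.piFinset fun _ ↦ {B ∈ T | P B} := by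
    ext ω
    simp [forall_and]
  rw [this, Fintype.card_piFinset_const]

theorem exists_tuple_card_uncovered_le (T : Finset β) (hT : T.Nonempty) (𝒳 : Finset γ)
    (good : γ → β → Prop) [∀ X, DecidablePred (good X)] (l : ℕ) :
    ∃ ω : Fin l → β, (∀ j, ω j ∈ T) ∧
      (#{X ∈ 𝒳 | ∀ j, ¬ good X (ω j)} : ℝ) ≤
        ∑ X ∈ 𝒳, (1 - #{B ∈ T | good X B} / #T : ℝ) ^ l := by
  set Ω := Fintype.piFinset fun _ : Fin l ↦ T
  have hΩ : Ω.Nonempty := Fintype.piFinset_nonempty.2 fun _ ↦ hT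
  have hT0 : (#T : ℝ) ≠ 0 := Nat.cast_ne_zero.2 hT.card_pos.ne'
  have hmiss (X : γ) : (1 - #{B ∈ T | good X B} / #T : ℝ) = #{B ∈ T | ¬ good X B} / #T := by
    rw [eq_div_iff hT0, sub_mul, one_mul, div_mul_cancel₀ _ hT0,
      ← card_filter_add_card_filter_not (good X) (s := T)]
    push_cast
    ring
  have hcount : ∑ ω ∈ Ω, #{X ∈ 𝒳 | ∀ j, ¬ good X (ω j)} =
      ∑ X ∈ 𝒳, #{B ∈ T | ¬ good X B} ^ l := by
    simp_rw [← card_filter_piFinset_const_forall, card_filter]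
    exact sum_comm
  have hmean : ∑ ω ∈ Ω, (#{X ∈ 𝒳 | ∀ j, ¬ good X (ω j)} : ℝ) =
      ∑ _ω ∈ Ω, ∑ X ∈ 𝒳, (1 - #{B ∈ T | good X B} / #T : ℝ) ^ l := by
    rw [sum_const, Fintype.card_piFinset_const, nsmul_eq_mul, mul_sum]
    simp_rw [hmiss, div_pow]
    rw [← Nat.cast_sum, hcount]
    push_cast
    refine sum_congr rfl fun X _ ↦ ?_
    field_simp
  obtain ⟨ω, hω, hle⟩ := exists_le_of_sum_le hΩ hmean.le
  exact ⟨ω, Fintype.mem_piFinset.1 hω, hle⟩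

end FirstMoment

section Counting

variable {α : Type*} [Fintype α] [DecidableEq α]

theorem card_filter_card_sdiff_eq_one {t : ℕ} {X : Finset α} (hX : #X ≤ t + 1) :
    #{B ∈ powersetCard t univ | #(X \ B) = 1} =
      #X * (Fintype.card α - #X).choose (t + 1 - #X) := by
  trans #(powersetCard 1 X ×ˢ powersetCard (t + 1 - #X) Xᶜ)
  swap
  · rw [card_product, card_powersetCard, card_powersetCard, card_compl, Nat.choose_one_right]
  -- a block is determined by the element of `X` it excludes and its part outside `X`
  refine card_nbij' (fun B ↦ (X \ B, B \ X)) (fun p ↦ X \ p.1 ∪ p.2) ?_ ?_ ?_ ?_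
  · intro B hB
    simp only [mem_coe, mem_filter, mem_powersetCard, subset_univ, true_and] at hB
    have h1 := card_sdiff_add_card_inter X B
    have h2 := card_sdiff_add_card_inter B X
    rw [inter_comm] at h2
    simp only [mem_coe, mem_product, mem_powersetCard]
    exact ⟨⟨sdiff_subset, hB.2⟩, sdiff_eq_inter_compl B X ▸ inter_subset_right, by omega⟩
  · rintro ⟨D, C⟩ hp
    simp only [mem_coe, mem_product, mem_powersetCard] at hp
    obtain ⟨⟨hDX, hD⟩, hCX, hC⟩ := hp
    have hdisj : Disjoint (X \ D) C := by
      rw [subset_compl_iff_disjoint_left] at hCX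
      exact hCX.mono_left sdiff_subset
    have hXD : X \ (X \ D ∪ C) = D := by
      ext x
      have := @hDX x
      have := @hCX x
      simp only [mem_sdiff, mem_union, mem_compl] at *
      tauto
    have := card_le_card hDX
    simp only [mem_coe, mem_filter, mem_powersetCard, subset_univ, true_and, hXD, hD,
      card_union_of_disjoint hdisj, card_sdiff_of_subset hDX, hC, and_true]
    omega
  · intro B _
    ext x
    simp only [mem_union, mem_sdiff]
    tauto
  · rintro ⟨D, C⟩ hp
    simp only [mem_coe, mem_product, mem_powersetCard] at hp
    obtain ⟨⟨hDX, -⟩, hCX, -⟩ := hp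
    ext x
    all_goals
      have := @hDX x
      have := @hCX x
      simp only [mem_sdiff, mem_union, mem_compl] at *
      tauto

theorem exists_card_eq_card_sdiff_eq_one {t : ℕ} (ht : t < Fintype.card α) {X : Finset α}
    (hX₁ : 1 ≤ #X) (hX₂ : #X ≤ t + 1) : ∃ B : Finset α, #B = t ∧ #(X \ B) = 1 := by
  obtain ⟨B, hB⟩ : ({B ∈ powersetCard t univ | #(X \ B) = 1} : Finset (Finset α)).Nonempty := by
    rw [← card_pos, card_filter_card_sdiff_eq_one hX₂]
    exact Nat.mul_pos hX₁ (Nat.choose_pos (by omega))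
  simp only [mem_filter, mem_powersetCard, subset_univ, true_and] at hB
  exact ⟨B, hB⟩

omit [DecidableEq α] in
theorem sum_filter_card_mem {M : Type*} [AddCommMonoid M] (I : Finset ℕ) (f : ℕ → M) :
    ∑ X ∈ ({X | #X ∈ I} : Finset (Finset α)), f #X =
      ∑ i ∈ I, (Fintype.card α).choose i • f i := by
  rw [← sum_fiberwise_of_maps_to fun X hX ↦ (mem_filter.1 hX).2]
  refine sum_congr rfl fun i hi ↦ ?_
  have hfiber : ({X ∈ {X | #X ∈ I} | #X = i} : Finset (Finset α)) = powersetCard i univ := by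
    ext X
    simp only [mem_filter, mem_univ, true_and, mem_powersetCard, subset_univ]
    exact ⟨And.right, fun h ↦ ⟨h ▸ hi, h⟩⟩
  rw [sum_congr rfl fun X hX ↦ by rw [(mem_filter.1 hX).2], sum_const, hfiber,
    card_powersetCard, card_univ]

theorem sum_one_sub_card_sdiff_eq_one_div_pow (t l : ℕ) :
    ∑ X ∈ ({X | #X ∈ Icc 1 (t + 1)} : Finset (Finset α)),
        (1 - #{B ∈ powersetCard t (univ : Finset α) | #(X \ B) = 1} /
          #(powersetCard t (univ : Finset α)) : ℝ) ^ l =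
      ∑ i ∈ Icc 1 (t + 1), ((Fintype.card α).choose i : ℝ) *
        (1 - (i * (Fintype.card α - i).choose (t + 1 - i) : ℝ) / (Fintype.card α).choose t) ^ l := by
  rw [sum_congr rfl fun X hX ↦ by
    rw [card_filter_card_sdiff_eq_one (mem_Icc.1 (mem_filter.1 hX).2).2]]
  refine (sum_filter_card_mem (Icc 1 (t + 1)) fun i ↦
    (1 - ((i * (Fintype.card α - i).choose (t + 1 - i) : ℕ) : ℝ) /
      #(powersetCard t (univ : Finset α))) ^ l).trans ?_
  simp [card_powersetCard]

end Counting

theorem SENumber_le_card_add_card {n t : ℕ} (htn : t < n) (F U : Finset (Finset (Fin n)))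
    (hF : ∀ B ∈ F, #B = t)
    (hU : ∀ X : Finset (Fin n), 1 ≤ #X → #X ≤ t + 1 → (∃ B ∈ F, #(X \ B) = 1) ∨ X ∈ U) :
    SENumber n t ≤ #F + #U := by
  have hfix (X : Finset (Fin n)) (h₁ : 1 ≤ #X) (h₂ : #X ≤ t + 1) :
      ∃ B : Finset (Fin n), #B = t ∧ #(X \ B) = 1 :=
    exists_card_eq_card_sdiff_eq_one (by simpa using htn) h₁ h₂
  choose! fix hfix using hfix
  set S := F ∪ {B ∈ U.image fix | #B = t}
  have hS : IsSESystem n t S := by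
    refine ⟨fun B hB ↦ ?_, fun X h₁ h₂ ↦ ?_⟩
    · rcases mem_union.1 hB with hB | hB
      exacts [hF B hB, (mem_filter.1 hB).2]
    · rcases hU X h₁ h₂ with ⟨B, hB, hXB⟩ | hX
      · exact ⟨B, mem_union_left _ hB, hXB⟩
      · refine ⟨fix X, mem_union_right _ (mem_filter.2 ⟨mem_image_of_mem fix hX, ?_⟩), ?_⟩
        exacts [(hfix X h₁ h₂).1, (hfix X h₁ h₂).2]
  calc SENumber n t ≤ #S := Nat.sInf_le ⟨S, hS, rfl⟩
    _ ≤ #F + #{B ∈ U.image fix | #B = t} := card_union_le _ _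
    _ ≤ #F + #U := by grw [card_filter_le, card_image_le]

theorem stmt1_general (n t : ℕ) (htn : t < n) (l : ℕ) :
    (SENumber n t : ℝ) ≤ (l : ℝ) +
      ∑ i ∈ Finset.Icc 1 (t + 1),
        (n.choose i : ℝ) *
          (1 - (i * ((n - i).choose (t + 1 - i)) : ℝ) / (n.choose t : ℝ)) ^ l := by
  classical
  set T : Finset (Finset (Fin n)) := powersetCard t univ
  set 𝒳 : Finset (Finset (Fin n)) := {X | #X ∈ Icc 1 (t + 1)}
  have hT : T.Nonempty := powersetCard_nonempty.2 (by simpa using htn.le)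
  obtain ⟨ω, hωT, hω⟩ := exists_tuple_card_uncovered_le T hT 𝒳 (fun X B ↦ #(X \ B) = 1) l
  have hSE : SENumber n t ≤ #(univ.image ω) + #{X ∈ 𝒳 | ∀ j, ¬ #(X \ ω j) = 1} := by
    refine SENumber_le_card_add_card htn _ _ ?_ fun X h₁ h₂ ↦ ?_
    · simpa using fun j ↦ (mem_powersetCard.1 (hωT j)).2
    by_cases h : ∃ j, #(X \ ω j) = 1
    · obtain ⟨j, hj⟩ := h
      exact Or.inl ⟨ω j, mem_image_of_mem _ (mem_univ j), hj⟩
    · push Not at h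
      exact Or.inr (mem_filter.2 ⟨mem_filter.2 ⟨mem_univ _, mem_Icc.2 ⟨h₁, h₂⟩⟩, h⟩)
  have himage : #(univ.image ω) ≤ l := card_image_le.trans (by simp)
  calc (SENumber n t : ℝ) ≤ #(univ.image ω) + #{X ∈ 𝒳 | ∀ j, ¬ #(X \ ω j) = 1} := by
        exact_mod_cast hSE
    _ ≤ l + ∑ X ∈ 𝒳, (1 - #{B ∈ T | #(X \ B) = 1} / #T : ℝ) ^ l := by
        gcongr
    _ = _ := by
        rw [sum_one_sub_card_sdiff_eq_one_div_pow]
        simp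

theorem stmt1 (n t : ℕ) (ht : 0 < t) (htn : t < n) (l : ℕ) :
    (SENumber n t : ℝ) ≤ (l : ℝ) +
      ∑ i ∈ Finset.Icc 1 (t + 1),
        (n.choose i : ℝ) *
          (1 - (i * ((n - i).choose (t + 1 - i)) : ℝ) / (n.choose t : ℝ)) ^ l :=
  stmt1_general n t htn l
end

section
/- For all integers n, t and l with 0 < t < n − 2 and n/(n−t−2) ≤ l ≤ n, the single-exclusion number satisfies S(n,t) ≤ (1/l)·binom(n,t) + l·⌈n/l⌉·binom(n−⌊n/l⌋−1, t), where binom(a,b) denotes the binomial coefficient (equal to 0 when b < 0 or b > a). -/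
/-!
Put `m = ⌊n/l⌋` and cut `0, …, n-1` into consecutive runs of length `m`, giving the point `x`
the weight `⌊x/m⌋ mod l`. The blocks are of two kinds: the `t`-sets avoiding some window
`{a, …, a+m}`, and the `t`-sets whose total weight is a fixed residue `c`. If a window meets `X`
in a single point `p`, then `X \ {p}` extends to a block of the first kind. Otherwise `X` has no
gap of length `m`, so it meets every run and hence every weight class; completing `X` to a
`(t+1)`-set `Y` and removing the point of `X` whose weight is `∑_Y w - c` leaves a block of the
second kind. The `n - m` windows contribute `(n - m)·C(n-m-1, t)` blocks, and by pigeonhole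
some residue `c` contributes at most `C(n,t)/l`.
-/

open Finset

section Extension

variable {α : Type*} [DecidableEq α]

lemma sdiff_erase_eq_singleton {X Y : Finset α} {x : α} (hXY : X ⊆ Y) (hx : x ∈ X) :
    X \ Y.erase x = {x} := by
  rw [sdiff_erase hx, sdiff_eq_empty_iff_subset.mpr hXY]
  rfl

variable [Fintype α]

lemma exists_subset_compl_sdiff_eq_singleton {X W : Finset α} {p : α} {t : ℕ}
    (hXW : X ∩ W = {p}) (hX : X.card ≤ t + 1) (hW : t + W.card ≤ Fintype.card α) :
    ∃ B ⊆ Wᶜ, B.card = t ∧ X \ B = {p} := by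
  obtain ⟨hpX, hpW⟩ := mem_inter.mp (hXW ▸ mem_singleton_self p)
  have hXU : X ⊆ insert p Wᶜ := fun y hy => mem_insert.mpr <| (em (y ∈ W)).imp
    (fun hyW => mem_singleton.mp (hXW ▸ mem_inter.mpr ⟨hy, hyW⟩)) mem_compl.mpr
  have hU : t + 1 ≤ (insert p Wᶜ).card := by
    rw [card_insert_of_notMem fun h => mem_compl.mp h hpW, card_compl]
    omega
  obtain ⟨Y, hXY, hYU, hY⟩ := exists_subsuperset_card_eq hXU hX hU
  refine ⟨Y.erase p, fun y hy => ?_, by rw [card_erase_of_mem (hXY hpX), hY]; rfl,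
    sdiff_erase_eq_singleton hXY hpX⟩
  exact (mem_insert.mp (hYU (mem_of_mem_erase hy))).resolve_left (ne_of_mem_erase hy)

lemma exists_sum_eq_sdiff_eq_singleton {G : Type*} [AddCommGroup G] (w : α → G) (c : G)
    {X : Finset α} {t : ℕ} (hX : X.card ≤ t + 1) (ht : t + 1 ≤ Fintype.card α)
    (hw : ∀ g, ∃ x ∈ X, w x = g) :
    ∃ B, B.card = t ∧ ∑ y ∈ B, w y = c ∧ ∃ x, X \ B = {x} := by
  obtain ⟨Y, hXY, -, hY⟩ := exists_subsuperset_card_eq (subset_univ X) hX (by simpa using ht)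
  obtain ⟨x, hx, hwx⟩ := hw (∑ y ∈ Y, w y - c)
  refine ⟨Y.erase x, by rw [card_erase_of_mem (hXY hx), hY]; rfl, ?_,
    x, sdiff_erase_eq_singleton hXY hx⟩
  rw [sum_erase_eq_sub (hXY hx), hwx, sub_sub_cancel]

end Extension

section Windows

variable {n : ℕ}

def window (n m a : ℕ) : Finset (Fin n) :=
  univ.filter fun y => a ≤ y.val ∧ y.val ≤ a + m

@[simp]
lemma mem_window {m a : ℕ} {y : Fin n} : y ∈ window n m a ↔ a ≤ y.val ∧ y.val ≤ a + m := by
  simp [window]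

lemma card_window {m a : ℕ} (h : a + m < n) : (window n m a).card = m + 1 := by
  have he : window n m a = (Icc a (a + m)).attachFin
      (fun x hx => by rw [mem_Icc] at hx; omega) := by
    ext y
    simp
  rw [he, card_attachFin, Nat.card_Icc]
  omega

def windowBlocks (n t m : ℕ) : Finset (Finset (Fin n)) :=
  (range (n - m)).biUnion fun a => powersetCard t (window n m a)ᶜ

lemma card_windowBlocks_le (t m : ℕ) :
    (windowBlocks n t m).card ≤ (n - m) * (n - m - 1).choose t := by
  refine (card_biUnion_le_card_mul _ _ _ fun a ha => ?_).trans_eq (by rw [card_range])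
  rw [card_powersetCard, card_compl, Fintype.card_fin, card_window (by simp at ha; omega)]
  rfl

/-- The last point of `X` before the gap, or else the first one after it, is alone in the window
starting, resp. ending, at it. -/
lemma exists_window_inter_card_eq_one {m a : ℕ} {X : Finset (Fin n)} (hX : X.Nonempty)
    (ha : a + m ≤ n) (hgap : ∀ x ∈ X, x.val < a ∨ a + m ≤ x.val) :
    ∃ b, b + m < n ∧ (X ∩ window n m b).card = 1 := by
  simp_rw [card_eq_one]
  rcases (X.filter fun x => x.val < a).eq_empty_or_nonempty with hL | hL
  · obtain ⟨p, hpX, hpmin⟩ : ∃ p ∈ X, ∀ y ∈ X, p ≤ y := ⟨X.min' hX, X.min'_mem hX, X.min'_le⟩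
    have hp : a + m ≤ p.val := (hgap p hpX).resolve_left fun h =>
      (eq_empty_iff_forall_notMem.mp hL) p (mem_filter.mpr ⟨hpX, h⟩)
    refine ⟨p.val - m, by omega, p, eq_singleton_iff_unique_mem.mpr ⟨?_, fun y hy => ?_⟩⟩
    · exact mem_inter.mpr ⟨hpX, mem_window.mpr (by omega)⟩
    · rw [mem_inter, mem_window] at hy
      have := Fin.le_iff_val_le_val.mp (hpmin y hy.1)
      exact Fin.ext (by omega)
  · obtain ⟨p, hpL, hpmax⟩ : ∃ p ∈ X.filter (fun x => x.val < a),
        ∀ y ∈ X.filter (fun x => x.val < a), y ≤ p := ⟨_, max'_mem _ hL, fun y => le_max' _ y⟩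
    rw [mem_filter] at hpL
    refine ⟨p.val, by omega, p, eq_singleton_iff_unique_mem.mpr ⟨?_, fun y hy => ?_⟩⟩
    · exact mem_inter.mpr ⟨hpL.1, mem_window.mpr (by omega)⟩
    · rw [mem_inter, mem_window] at hy
      have := hgap y hy.1
      have := Fin.le_iff_val_le_val.mp (hpmax y (mem_filter.mpr ⟨hy.1, by omega⟩))
      exact Fin.ext (by omega)

end Windows

section Residues

variable {n : ℕ}

def runWeight (l m : ℕ) (x : Fin n) : ZMod l := (x.val / m : ℕ)

def residueBlocks (n t l m : ℕ) (c : ZMod l) : Finset (Finset (Fin n)) :=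
  (powersetCard t univ).filter fun B => ∑ y ∈ B, runWeight l m y = c

variable {l : ℕ} [NeZero l]

lemma exists_card_residueBlocks_le (t m : ℕ) :
    ∃ c, ((residueBlocks n t l m c).card : ℝ) ≤ n.choose t / l :=
  let ⟨c, _, hc⟩ := exists_card_fiber_le_of_card_le_nsmul (s := powersetCard t univ)
    (f := fun B => ∑ y ∈ B, runWeight l m y) univ_nonempty (b := (n.choose t / l : ℝ))
    (by simp [mul_div_cancel₀ _ (NeZero.ne (l : ℝ))])
  ⟨c, hc⟩

lemma exists_runWeight_eq {m : ℕ} (hml : m * l ≤ n) {X : Finset (Fin n)} (hX : X.Nonempty)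
    (hiso : ∀ a, a + m < n → (X ∩ window n m a).card ≠ 1) (g : ZMod l) :
    ∃ x ∈ X, runWeight l m x = g := by
  by_contra! hg
  have hrun : g.val * m + m ≤ n :=
    calc g.val * m + m = (g.val + 1) * m := (Nat.succ_mul _ _).symm
      _ ≤ m * l := (Nat.mul_le_mul_right m (ZMod.val_lt g)).trans_eq (Nat.mul_comm l m)
      _ ≤ n := hml
  refine (exists_window_inter_card_eq_one hX hrun fun x hx => ?_).elim
    fun b ⟨hb, h⟩ => hiso b hb h
  by_contra! hx'
  apply hg x hx
  rw [runWeight, Nat.div_eq_of_lt_le hx'.1 (by rw [Nat.succ_mul]; exact hx'.2),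
    ZMod.natCast_zmod_val]

end Residues

lemma isSESystem_residueBlocks_union_windowBlocks {n t l m : ℕ} [NeZero l] (hml : m * l ≤ n)
    (hmt : m + t + 1 ≤ n) (c : ZMod l) :
    IsSESystem n t (residueBlocks n t l m c ∪ windowBlocks n t m) := by
  refine ⟨fun B hB => ?_, fun X hX1 hX2 => ?_⟩
  · simp only [residueBlocks, windowBlocks, mem_union, mem_filter, mem_biUnion,
      mem_powersetCard] at hB
    rcases hB with ⟨⟨-, h⟩, -⟩ | ⟨-, -, -, h⟩ <;> exact h
  by_cases hiso : ∃ a, a + m < n ∧ (X ∩ window n m a).card = 1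
  · obtain ⟨a, ha, hXa⟩ := hiso
    obtain ⟨p, hp⟩ := card_eq_one.mp hXa
    obtain ⟨B, hBW, hB, hXB⟩ := exists_subset_compl_sdiff_eq_singleton hp hX2
      (by rw [card_window ha, Fintype.card_fin]; omega)
    refine ⟨B, mem_union_right _ (mem_biUnion.mpr ⟨a, mem_range.mpr (by omega), ?_⟩), ?_⟩
    · exact mem_powersetCard.mpr ⟨hBW, hB⟩
    · rw [hXB, card_singleton]
  · push Not at hiso
    obtain ⟨B, hB, hBc, x, hXB⟩ := exists_sum_eq_sdiff_eq_singleton (runWeight l m) c hX2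
      (by rw [Fintype.card_fin]; omega) (exists_runWeight_eq hml (card_pos.mp hX1) hiso)
    refine ⟨B, mem_union_left _ (mem_filter.mpr ⟨mem_powersetCard.mpr ⟨subset_univ B, hB⟩, hBc⟩),
      by rw [hXB, card_singleton]⟩

lemma SENumber_le_card {n t : ℕ} {S : Finset (Finset (Fin n))} (hS : IsSESystem n t S) :
    SENumber n t ≤ S.card :=
  Nat.sInf_le ⟨S, hS, rfl⟩

lemma pos_and_div_add_le_of_div_sub_le {n t l : ℕ} (htn : t + 2 < n)
    (hl : (n : ℝ) / (n - t - 2) ≤ l) : 0 < l ∧ n / l + t + 2 ≤ n := by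
  have hden : (0 : ℝ) < n - t - 2 := by
    have : (t + 2 : ℝ) < n := by exact_mod_cast htn
    linarith
  have hl0 : 0 < l := by
    have := div_pos (Nat.cast_pos.mpr (by omega : 0 < n)) hden
    exact_mod_cast this.trans_le hl
  have hm : ((n / l : ℕ) : ℝ) ≤ n - t - 2 :=
    Nat.cast_div_le.trans ((div_le_iff₀ (by exact_mod_cast hl0)).mpr
      (by rw [div_le_iff₀ hden] at hl; linarith))
  refine ⟨hl0, ?_⟩
  exact_mod_cast (by push_cast; linarith : ((n / l + t + 2 : ℕ) : ℝ) ≤ n)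

theorem stmt4_general (n t l : ℕ) (htn : t + 2 < n)
    (hl1 : (n : ℝ) / ((n : ℝ) - (t : ℝ) - 2) ≤ (l : ℝ)) :
    (SENumber n t : ℝ) ≤ (1 / (l : ℝ)) * (n.choose t : ℝ) +
      (l : ℝ) * (((n + l - 1) / l : ℕ) : ℝ) * ((n - n / l - 1).choose t : ℝ) := by
  obtain ⟨hl, hmt⟩ := pos_and_div_add_le_of_div_sub_le htn hl1
  have : NeZero l := ⟨hl.ne'⟩
  have hceil : n ≤ l * ((n + l - 1) / l) := (ceilDiv_le_iff_le_mul hl).mp le_rfl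
  obtain ⟨c, hc⟩ := exists_card_residueBlocks_le (n := n) (l := l) t (n / l)
  have hS := isSESystem_residueBlocks_union_windowBlocks (Nat.div_mul_le_self n l)
    (by omega : n / l + t + 1 ≤ n) c
  have hW : ((windowBlocks n t (n / l)).card : ℝ) ≤
      l * ((n + l - 1) / l : ℕ) * (n - n / l - 1).choose t := by
    exact_mod_cast (card_windowBlocks_le t (n / l)).trans
      (Nat.mul_le_mul_right _ ((n.sub_le _).trans hceil))
  calc (SENumber n t : ℝ)
      ≤ (residueBlocks n t l (n / l) c ∪ windowBlocks n t (n / l)).card := by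
        exact_mod_cast SENumber_le_card hS
    _ ≤ (residueBlocks n t l (n / l) c).card + (windowBlocks n t (n / l)).card := by
        exact_mod_cast card_union_le _ _
    _ ≤ _ := by rw [one_div_mul_eq_div]; exact add_le_add hc hW

theorem stmt4 (n t l : ℕ) (ht : 0 < t) (htn : t + 2 < n)
    (hl1 : (n : ℝ) / ((n : ℝ) - (t : ℝ) - 2) ≤ (l : ℝ)) (hl2 : l ≤ n) :
    (SENumber n t : ℝ) ≤ (1 / (l : ℝ)) * (n.choose t : ℝ) +
      (l : ℝ) * (((n + l - 1) / l : ℕ) : ℝ) * ((n - n / l - 1).choose t : ℝ) :=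
  stmt4_general n t l htn hl1
end
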